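/- Let G' be an extended 1-dimensional hierarchical graph with vertex layers S_0, …, S_n and edge layers L_0, L_1, …, L_{n+1}. Then for every i with 0 ≤ i ≤ n, the vector √(W_{i+1}) |L_i⟩ − √(W_i) |L_{i+1}⟩ is orthogonal to ψ_u for every u ∈ S_i. -/

import Mathlib

/-!
**Statement 13.**
Let `G'` be an extended 1-dimensional hierarchical graph with vertex layers `S_0, …, S_n` and
edge layers `L_0, L_1, …, L_{n+1}`.  Then for every `i ≤ n`, the vector
`√(W_{i+1}) |L_i⟩ − √(W_i) |L_{i+1}⟩` is orthogonal to `ψ_u` for every `u ∈ S_i`.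

The hierarchical graph is modelled abstractly: vertices `V` carry a layer `vlayer u ≤ n`,
edges `E` carry a layer `elayer e ∈ {1, …, n}` and endpoint maps `lo` (in `S_{elayer e − 1}`)
and `hi` (in `S_{elayer e}`); `s` and `t` are the unique vertices of layers `0` and `n`;
every vertex of `S_i` (`i < n`) has exactly `d⁺_i` up-edges and every vertex of `S_i`
(`i ≥ 1`) has exactly `d⁻_i` down-edges.  The dangling edge `ss'` (layer `L_0`) has weight
`W_0 > 0` and `t't` (layer `L_{n+1}`) has weight `W_{n+1} > 0`; all original edges have
weight 1 and `W_i = |L_i|` for `1 ≤ i ≤ n`.  The walk space is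
`EuclideanSpace ℂ (E ⊕ Bool)` (`Sum.inr false = ss'`, `Sum.inr true = t't`);
`|L_i⟩ = (1/√(W_i)) ∑_{e ∈ L_i} |e⟩` and `ψ_u = ∑_{e ∼ u} √(w_e) |e⟩`.
-/

noncomputable section

namespace Stmt13

variable {V E : Type*} [Fintype V] [Fintype E] [DecidableEq V] [DecidableEq E]

def ket (x : E ⊕ Bool) : EuclideanSpace ℂ (E ⊕ Bool) := EuclideanSpace.single x 1

/-- The weight `W_i` of the `i`-th edge layer: `W_0` and `W_{n+1}` are the weights of the
dangling edges, and `W_i = |L_i|` for `1 ≤ i ≤ n`. -/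
def Wt (n : ℕ) (elayer : E → ℕ) (W0 Wn1 : ℝ) (i : ℕ) : ℝ :=
  if i = 0 then W0 else if i = n + 1 then Wn1
  else ((Finset.univ.filter fun e => elayer e = i).card : ℝ)

/-- The normalized layer-uniform state `|L_i⟩`. -/
def Lket (n : ℕ) (elayer : E → ℕ) (W0 Wn1 : ℝ) (i : ℕ) : EuclideanSpace ℂ (E ⊕ Bool) :=
  if i = 0 then ket (Sum.inr false) else if i = n + 1 then ket (Sum.inr true)
  else ((Real.sqrt (Wt n elayer W0 Wn1 i))⁻¹ : ℂ) •
    ∑ e ∈ Finset.univ.filter (fun e => elayer e = i), ket (Sum.inl e)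

/-- The star state `ψ_u` of a vertex of the extended hierarchical graph. -/
def psi (lo hi : E → V) (s t : V) (W0 Wn1 : ℝ) (u : V) : EuclideanSpace ℂ (E ⊕ Bool) :=
  (∑ e ∈ Finset.univ.filter (fun e => hi e = u), ket (Sum.inl e)) +
  (∑ e ∈ Finset.univ.filter (fun e => lo e = u), ket (Sum.inl e)) +
  (if u = s then (Real.sqrt W0 : ℂ) • ket (Sum.inr false) else 0) +
  (if u = t then (Real.sqrt Wn1 : ℂ) • ket (Sum.inr true) else 0)

end Stmt13

/-!
Both inner products are real: `⟨ψ_u, L_j⟩ = d_j(u) / √W_j`, where `d_j(u)` is the weight of the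
edges of `L_j` at `u`. For `u ∈ S_i`, each edge of `L_i` has its upper and each edge of `L_{i+1}`
its lower endpoint in `S_i`, and `d_i`, `d_{i+1}` are constant on `S_i` (by regularity, or because
`S_0 = {s}` and `S_n = {t}`), so `W_i = |S_i| d_i(u)` and `W_{i+1} = |S_i| d_{i+1}(u)`. Hence
`√W_{i+1} d_i(u) / √W_i = √W_i d_{i+1}(u) / √W_{i+1}`.
-/

namespace Stmt13

open Finset

lemma sqrt_mul_div_sqrt_eq {a b x y : ℝ} (h : b * x = a * y) :
    √b * (x / √a) = √a * (y / √b) := by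
  rcases le_or_gt a 0 with ha | ha
  · simp [Real.sqrt_eq_zero'.2 ha]
  rcases le_or_gt b 0 with hb | hb
  · simp [Real.sqrt_eq_zero'.2 hb]
  field_simp
  rw [Real.sq_sqrt ha.le, Real.sq_sqrt hb.le]
  linear_combination h

lemma card_filter_comp_eq_card_mul {α β γ : Type*} [Fintype α] [Fintype β] [DecidableEq β]
    [DecidableEq γ] (f : α → β) (g : β → γ) (k : γ) (d : ℕ)
    (hd : ∀ b, g b = k → #{a | f a = b} = d) :
    #{a | g (f a) = k} = #{b | g b = k} * d := by
  rw [card_eq_sum_card_fiberwise (f := f) (t := {b | g b = k}) (fun a ha => by simpa using ha)]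
  refine sum_const_nat fun b hb => ?_
  rw [mem_filter] at hb
  rw [filter_filter, ← hd b hb.2]
  congr 1
  ext a
  simp only [mem_filter, mem_univ, true_and, and_iff_right_iff_imp]
  rintro rfl
  exact hb.2

lemma card_filter_eq_one {α : Type*} [Fintype α] {p : α → Prop} [DecidablePred p] {a : α}
    (ha : p a) (h : ∀ b, p b → b = a) : #{b | p b} = 1 :=
  card_eq_one.2 ⟨a, by ext b; simpa using ⟨h b, fun hb => hb ▸ ha⟩⟩

section Layers

variable {V E : Type*} [DecidableEq V] [Fintype E]

/-- The total weight of the edges of `L_j` at `u` in `G'`. -/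
def layerDegree (n : ℕ) (elayer : E → ℕ) (lo hi : E → V) (s t : V) (W0 Wn1 : ℝ) (u : V) (j : ℕ) :
    ℝ :=
  if j = 0 then (if u = s then W0 else 0) else if j = n + 1 then (if u = t then Wn1 else 0)
  else (#{e | elayer e = j ∧ hi e = u} + #{e | elayer e = j ∧ lo e = u} : ℕ)

variable {n : ℕ} {vlayer : V → ℕ} {elayer : E → ℕ} {lo hi : E → V} {s t : V} {W0 Wn1 : ℝ}

section InnerProducts

variable [DecidableEq E]

lemma inner_ket_ket (x y : E ⊕ Bool) :
    inner ℂ (ket x) (ket y) = if x = y then 1 else 0 := by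
  rw [ket, ket, EuclideanSpace.inner_single_left, PiLp.single_apply]
  simp

lemma inner_psi_inl (u : V) (e : E) :
    inner ℂ (psi lo hi s t W0 Wn1 u) (ket (Sum.inl e))
      = (if hi e = u then 1 else 0) + (if lo e = u then 1 else 0) := by
  simp only [psi, inner_add_left, sum_inner, inner_smul_left,
    apply_ite (fun v : EuclideanSpace ℂ (E ⊕ Bool) => inner ℂ v (ket (Sum.inl e))),
    inner_zero_left, inner_ket_ket]
  simp [eq_comm]

lemma inner_psi_ss' (u : V) :
    inner ℂ (psi lo hi s t W0 Wn1 u) (ket (Sum.inr false)) = if u = s then (√W0 : ℂ) else 0 := by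
  simp only [psi, inner_add_left, sum_inner, inner_smul_left,
    apply_ite (fun v : EuclideanSpace ℂ (E ⊕ Bool) => inner ℂ v (ket (Sum.inr false))),
    inner_zero_left, inner_ket_ket]
  simp [Complex.conj_ofReal]

lemma inner_psi_t't (u : V) :
    inner ℂ (psi lo hi s t W0 Wn1 u) (ket (Sum.inr true)) = if u = t then (√Wn1 : ℂ) else 0 := by
  simp only [psi, inner_add_left, sum_inner, inner_smul_left,
    apply_ite (fun v : EuclideanSpace ℂ (E ⊕ Bool) => inner ℂ v (ket (Sum.inr true))),
    inner_zero_left, inner_ket_ket]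
  simp [Complex.conj_ofReal]

lemma inner_psi_Lket (u : V) (j : ℕ) :
    inner ℂ (psi lo hi s t W0 Wn1 u) (Lket n elayer W0 Wn1 j)
      = ((layerDegree n elayer lo hi s t W0 Wn1 u j / √(Wt n elayer W0 Wn1 j) : ℝ) : ℂ) := by
  -- on the dangling layers, `Real.div_sqrt : x / √x = √x` holds for every real `x`
  rcases eq_or_ne j 0 with rfl | hj0
  · rw [Lket, if_pos rfl, inner_psi_ss']
    split_ifs <;> simp [layerDegree, Wt, Real.div_sqrt, *]
  rcases eq_or_ne j (n + 1) with rfl | hjn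
  · rw [Lket, if_neg hj0, if_pos rfl, inner_psi_t't]
    split_ifs <;> simp [layerDegree, Wt, Real.div_sqrt, *]
  rw [Lket, if_neg hj0, if_neg hjn, inner_smul_right, inner_sum]
  simp only [inner_psi_inl, sum_add_distrib, sum_boole, filter_filter]
  simp [layerDegree, Wt, hj0, hjn, div_eq_inv_mul]

end InnerProducts

lemma card_filter_layer_hi (hhi : ∀ e, vlayer (hi e) = elayer e) (u : V) (j : ℕ) :
    #{e | elayer e = j ∧ hi e = u} = if vlayer u = j then #{e | hi e = u} else 0 := by
  split_ifs with hu
  · congr 1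
    ext e
    simp only [mem_filter, mem_univ, true_and, and_iff_right_iff_imp]
    rintro rfl
    rw [← hhi, hu]
  · rw [card_eq_zero, filter_eq_empty_iff]
    rintro e - ⟨rfl, rfl⟩
    exact hu (hhi e)

lemma card_filter_layer_lo (hlo : ∀ e, vlayer (lo e) + 1 = elayer e) (u : V) (j : ℕ) :
    #{e | elayer e = j ∧ lo e = u} = if vlayer u + 1 = j then #{e | lo e = u} else 0 := by
  split_ifs with hu
  · congr 1
    ext e
    simp only [mem_filter, mem_univ, true_and, and_iff_right_iff_imp]
    rintro rfl
    rw [← hlo, hu]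
  · rw [card_eq_zero, filter_eq_empty_iff]
    rintro e - ⟨rfl, rfl⟩
    exact hu (hlo e)

variable [Fintype V]

lemma Wt_eq_card_mul_layerDegree (hlo : ∀ e, vlayer (lo e) + 1 = elayer e)
    (hhi : ∀ e, vlayer (hi e) = elayer e) (hsu : ∀ u, vlayer u = 0 → u = s)
    {dminus : ℕ → ℕ} (hdm : ∀ u, 1 ≤ vlayer u → #{e | hi e = u} = dminus (vlayer u))
    {i : ℕ} (hin : i ≤ n) {u : V} (hu : vlayer u = i) :
    Wt n elayer W0 Wn1 i = #{v | vlayer v = i} * layerDegree n elayer lo hi s t W0 Wn1 u i := by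
  rcases eq_or_ne i 0 with rfl | hi0
  · have hus := hsu u hu
    rw [card_filter_eq_one (p := fun v => vlayer v = 0) hu fun v hv => (hsu v hv).trans hus.symm]
    simp [Wt, layerDegree, hus]
  have hin1 : i ≠ n + 1 := by omega
  have hL : #{e | elayer e = i} = #{v | vlayer v = i} * #{e | hi e = u} := by
    simp only [← hhi]
    exact card_filter_comp_eq_card_mul hi vlayer i _ fun v hv => by
      rw [hdm v (by omega), hdm u (by omega), hu, hv]
  simp [Wt, layerDegree, hi0, hin1, card_filter_layer_hi hhi, card_filter_layer_lo hlo, hu, hL]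

lemma Wt_succ_eq_card_mul_layerDegree (hlo : ∀ e, vlayer (lo e) + 1 = elayer e)
    (hhi : ∀ e, vlayer (hi e) = elayer e) (htu : ∀ u, vlayer u = n → u = t)
    {dplus : ℕ → ℕ} (hdp : ∀ u, vlayer u < n → #{e | lo e = u} = dplus (vlayer u))
    {i : ℕ} (hin : i ≤ n) {u : V} (hu : vlayer u = i) :
    Wt n elayer W0 Wn1 (i + 1)
      = #{v | vlayer v = i} * layerDegree n elayer lo hi s t W0 Wn1 u (i + 1) := by
  rcases eq_or_lt_of_le hin with rfl | hlt
  · have hut := htu u hu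
    rw [card_filter_eq_one (p := fun v => vlayer v = i) hu fun v hv => (htu v hv).trans hut.symm]
    simp [Wt, layerDegree, hut]
  have hL : #{e | elayer e = i + 1} = #{v | vlayer v = i} * #{e | lo e = u} := by
    simp only [← hlo, Nat.add_right_cancel_iff]
    exact card_filter_comp_eq_card_mul lo vlayer i _ fun v hv => by
      rw [hdp v (by omega), hdp u (by omega), hu, hv]
  simp [Wt, layerDegree, hlt.ne, card_filter_layer_hi hhi, card_filter_layer_lo hlo, hu, hL]

end Layers

variable {V E : Type*} [Fintype V] [Fintype E] [DecidableEq V] [DecidableEq E]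

theorem hierarchical_flat_orthogonality
    (n : ℕ) (vlayer : V → ℕ) (elayer : E → ℕ) (lo hi : E → V) (s t : V)
    (W0 Wn1 : ℝ)
    (hel : ∀ e, 1 ≤ elayer e ∧ elayer e ≤ n)
    (hlo : ∀ e, vlayer (lo e) = elayer e - 1)
    (hhi : ∀ e, vlayer (hi e) = elayer e)
    (hsu : ∀ u, vlayer u = 0 → u = s)
    (htu : ∀ u, vlayer u = n → u = t)
    (dplus dminus : ℕ → ℕ)
    (hdp : ∀ u, vlayer u < n →
        (Finset.univ.filter fun e => lo e = u).card = dplus (vlayer u))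
    (hdm : ∀ u, 1 ≤ vlayer u →
        (Finset.univ.filter fun e => hi e = u).card = dminus (vlayer u)) :
    ∀ i ≤ n, ∀ u, vlayer u = i →
      (inner ℂ (psi lo hi s t W0 Wn1 u)
        ((Real.sqrt (Wt n elayer W0 Wn1 (i + 1)) : ℂ) • Lket n elayer W0 Wn1 i
          - (Real.sqrt (Wt n elayer W0 Wn1 i) : ℂ) • Lket n elayer W0 Wn1 (i + 1)) : ℂ)
        = 0 := by
  intro i hin u hu
  have hlo_succ : ∀ e, vlayer (lo e) + 1 = elayer e := fun e => by
    have := hlo e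
    have := (hel e).1
    omega
  rw [inner_sub_right, inner_smul_right, inner_smul_right, inner_psi_Lket, inner_psi_Lket]
  norm_cast
  rw [sub_eq_zero]
  apply sqrt_mul_div_sqrt_eq
  rw [Wt_eq_card_mul_layerDegree hlo_succ hhi hsu hdm hin hu,
    Wt_succ_eq_card_mul_layerDegree hlo_succ hhi htu hdp hin hu]
  ring

end Stmt13
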